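/- arXiv:alg-geom/9401008 — 2 statements merged into one kernel-verified Lean document; each statement's English description precedes it below -/
import Mathlib

section
/- Let (E₁, E₂, Φ) be a τ-stable triple and let τ' satisfy r₁τ + r₂τ' = deg E₁ + deg E₂. Then: (1) μ(E₁') < τ for all nonzero holomorphic subbundles E₁' ⊆ E₁; (2) μ(E₂') < τ' for all nonzero holomorphic subbundles E₂' ⊆ ker Φ; (3) μ(E₂'') > τ' for all nonzero holomorphic quotients E₂'' of E₂; (4) μ(E₁'') > τ for all nonzero holomorphic quotients E₁'' of E₁ with π∘Φ = 0, where π: E₁ → E₁'' is the quotient map. -/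
open CategoryTheory CategoryTheory.Limits

noncomputable section

/-- Slope `d/r` of a bundle of degree `d` and rank `r`. -/
def bslope (d : ℤ) (r : ℕ) : ℝ := (d : ℝ) / (r : ℝ)

/-- The quantity `θ_τ(T')` for a subtriple with ranks `r1', r2'` and degrees `d1', d2'`
of a triple with ranks `r1, r2` and degrees `d1, d2`. -/
def thetaTau (τ : ℝ) (r1 r2 : ℕ) (d1 d2 : ℤ) (r1' r2' : ℕ) (d1' d2' : ℤ) : ℝ :=
  (bslope (d1' + d2') (r1' + r2') - τ) -
    ((r2' : ℝ) / (r2 : ℝ)) * (((r1 : ℝ) + (r2 : ℝ)) / ((r1' : ℝ) + (r2' : ℝ))) *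
      (bslope (d1 + d2) (r1 + r2) - τ)

universe v u

variable {C : Type u} [Category.{v} C] [Abelian C]

/-- `(E1', E2')` is a subtriple of `(E1, E2, Φ)` : `Φ` maps `E2'` into `E1'`. -/
def IsSubtriple {E1 E2 : C} (Φ : E2 ⟶ E1) (E1' : Subobject E1) (E2' : Subobject E2) : Prop :=
  E1'.Factors (E2'.arrow ≫ Φ)

/-- `θ_τ` of a subtriple, expressed through rank and degree functions. -/
def theta (rank : C → ℕ) (deg : C → ℤ) (E1 E2 : C) (τ : ℝ)
    (E1' : Subobject E1) (E2' : Subobject E2) : ℝ :=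
  thetaTau τ (rank E1) (rank E2) (deg E1) (deg E2)
    (rank (E1' : C)) (rank (E2' : C)) (deg (E1' : C)) (deg (E2' : C))

/-- τ-stability of the holomorphic triple `(E1, E2, Φ)`. -/
def TStable (rank : C → ℕ) (deg : C → ℤ) (E1 E2 : C) (Φ : E2 ⟶ E1) (τ : ℝ) : Prop :=
  ∀ (E1' : Subobject E1) (E2' : Subobject E2), IsSubtriple Φ E1' E2' →
    ¬(E1' = ⊥ ∧ E2' = ⊥) → ¬(E1' = ⊤ ∧ E2' = ⊤) →
    theta rank deg E1 E2 τ E1' E2' < 0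

/-- τ-semistability of the holomorphic triple `(E1, E2, Φ)`. -/
def TSemistable (rank : C → ℕ) (deg : C → ℤ) (E1 E2 : C) (Φ : E2 ⟶ E1) (τ : ℝ) : Prop :=
  ∀ (E1' : Subobject E1) (E2' : Subobject E2), IsSubtriple Φ E1' E2' →
    ¬(E1' = ⊥ ∧ E2' = ⊥) → ¬(E1' = ⊤ ∧ E2' = ⊤) →
    theta rank deg E1 E2 τ E1' E2' ≤ 0

/-- Slope stability for a single bundle. -/
def BStable (rank : C → ℕ) (deg : C → ℤ) (B : C) : Prop :=
  ∀ X : Subobject B, X ≠ ⊥ → X ≠ ⊤ →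
    bslope (deg (X : C)) (rank (X : C)) < bslope (deg B) (rank B)

/-- Slope semistability for a single bundle. -/
def BSemistable (rank : C → ℕ) (deg : C → ℤ) (B : C) : Prop :=
  ∀ X : Subobject B, X ≠ ⊥ →
    bslope (deg (X : C)) (rank (X : C)) ≤ bslope (deg B) (rank B)

/-! Once `τ'` is fixed by `r₁τ + r₂τ' = d₁ + d₂`, `θ_τ(T')` equals
`(d₁' + d₂' - r₁'τ - r₂'τ') / (r₁' + r₂')`, so stability says that every proper nonzero subtriple
has degree `d₁' + d₂' < r₁'τ + r₂'τ'`. The subtriples `(E₁', 0)` and `(0, E₂')` with `E₂' ⊆ ker Φ`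
give the bounds on subobjects directly; `(E₁, E₂')` and `(E₁', E₂)` with `π ∘ Φ = 0` give the
bounds on quotients once rank and degree are split additively over `E' ⊆ E ↠ E / E'`. -/

lemma bslope_lt_iff {d : ℤ} {r : ℕ} (hr : 0 < r) (t : ℝ) : bslope d r < t ↔ (d : ℝ) < r * t := by
  rw [bslope, div_lt_iff₀ (by exact_mod_cast hr), mul_comm]

lemma lt_bslope_iff {d : ℤ} {r : ℕ} (hr : 0 < r) (t : ℝ) : t < bslope d r ↔ r * t < (d : ℝ) := by
  rw [bslope, lt_div_iff₀ (by exact_mod_cast hr), mul_comm]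

lemma thetaTau_neg_iff {τ τ' : ℝ} {r1 r2 : ℕ} {d1 d2 : ℤ} {r1' r2' : ℕ} {d1' d2' : ℤ}
    (h2 : 0 < r2) (h' : 0 < r1' + r2') (hsum : (r1 : ℝ) * τ + r2 * τ' = d1 + d2) :
    thetaTau τ r1 r2 d1 d2 r1' r2' d1' d2' < 0 ↔ (d1' + d2' : ℝ) < r1' * τ + r2' * τ' := by
  have hr' : (0 : ℝ) < r1' + r2' := by exact_mod_cast h'
  have hθ : thetaTau τ r1 r2 d1 d2 r1' r2' d1' d2' =
      ((d1' + d2' : ℝ) - r1' * τ - r2' * τ') / (r1' + r2') := by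
    unfold thetaTau bslope
    push_cast
    rw [← hsum]
    field_simp
    ring
  rw [hθ, div_lt_iff₀ hr', zero_mul, sub_sub, sub_neg]

lemma isZero_of_top_eq_bot {B : C} (h : (⊤ : Subobject B) = ⊥) : IsZero B := by
  by_contra hB
  have := Subobject.nontrivial_of_not_isZero hB
  exact top_ne_bot h

section RankDegree

variable {rank : C → ℕ} {deg : C → ℤ}

lemma deg_bot_eq_zero
    (hdeg_add : ∀ (B : C) (X : Subobject B), deg B = deg (X : C) + deg (cokernel X.arrow))
    (hdeg_iso : ∀ A B : C, Nonempty (A ≅ B) → deg A = deg B) (B : C) :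
    deg ((⊥ : Subobject B) : C) = 0 := by
  have hcok := hdeg_iso _ B
    ⟨cokernelIsoOfEq Subobject.bot_arrow ≪≫ cokernelZeroIsoTarget⟩
  have := hdeg_add B ⊥
  omega

lemma rank_pos_of_ne_bot (hrank_bot : ∀ (B : C) (X : Subobject B), X = ⊥ ↔ rank (X : C) = 0)
    {B : C} {X : Subobject B} (hX : X ≠ ⊥) : 0 < rank (X : C) :=
  Nat.pos_of_ne_zero fun h => hX ((hrank_bot B X).mpr h)

lemma top_ne_bot_of_rank_pos (hrank_bot : ∀ (B : C) (X : Subobject B), X = ⊥ ↔ rank (X : C) = 0)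
    (hrank_top : ∀ B : C, rank ((⊤ : Subobject B) : C) = rank B) {B : C} (hB : 0 < rank B) :
    (⊤ : Subobject B) ≠ ⊥ := by
  rw [Ne, hrank_bot, hrank_top]
  exact hB.ne'

lemma rank_cokernel_pos (hrank_bot : ∀ (B : C) (X : Subobject B), X = ⊥ ↔ rank (X : C) = 0)
    (hrank_top : ∀ B : C, rank ((⊤ : Subobject B) : C) = rank B)
    {B : C} {X : Subobject B} (hX : X ≠ ⊤) : 0 < rank (cokernel X.arrow) := by
  refine Nat.pos_of_ne_zero fun h => hX ?_
  have hzero : IsZero (cokernel X.arrow) :=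
    isZero_of_top_eq_bot ((hrank_bot _ ⊤).mpr (by rw [hrank_top, h]))
  have := Preadditive.epi_of_isZero_cokernel _ hzero
  have := isIso_of_mono_of_epi X.arrow
  exact Subobject.eq_top_of_isIso_arrow X

lemma lt_bslope_cokernel_iff
    (hrank_add : ∀ (B : C) (X : Subobject B), rank B = rank (X : C) + rank (cokernel X.arrow))
    (hdeg_add : ∀ (B : C) (X : Subobject B), deg B = deg (X : C) + deg (cokernel X.arrow))
    {B : C} {X : Subobject B} (hX : 0 < rank (cokernel X.arrow)) (t : ℝ) :
    t < bslope (deg (cokernel X.arrow)) (rank (cokernel X.arrow)) ↔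
      (deg (X : C) : ℝ) - rank (X : C) * t < deg B - rank B * t := by
  rw [lt_bslope_iff hX, hrank_add B X, hdeg_add B X]
  push_cast
  constructor <;> intro h <;> linarith

end RankDegree

section Subtriple

variable {E1 E2 : C} (Φ : E2 ⟶ E1)

lemma isSubtriple_bot_right (E1' : Subobject E1) : IsSubtriple Φ E1' ⊥ := by
  rw [IsSubtriple, Subobject.bot_arrow, zero_comp]
  exact Subobject.factors_zero

lemma isSubtriple_bot_left {E2' : Subobject E2} (h : E2' ≤ kernelSubobject Φ) :
    IsSubtriple Φ ⊥ E2' := by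
  rw [IsSubtriple, ← Subobject.ofLE_arrow h, Category.assoc, kernelSubobject_arrow_comp,
    comp_zero]
  exact Subobject.factors_zero

lemma isSubtriple_top_right {E1' : Subobject E1} (h : Φ ≫ cokernel.π E1'.arrow = 0) :
    IsSubtriple Φ E1' ⊤ :=
  (Subobject.factors_iff _ _).mpr ⟨Abelian.monoLift E1'.arrow _
    (by rw [Category.assoc, h, comp_zero]), Abelian.monoLift_comp E1'.arrow _ _⟩

end Subtriple

lemma TStable.deg_add_deg_lt {rank : C → ℕ} {deg : C → ℤ} {E1 E2 : C} {Φ : E2 ⟶ E1} {τ : ℝ}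
    (hst : TStable rank deg E1 E2 Φ τ) {τ' : ℝ}
    (hrank_bot : ∀ (B : C) (X : Subobject B), X = ⊥ ↔ rank (X : C) = 0) (h2 : 0 < rank E2)
    (hττ' : (rank E1 : ℝ) * τ + (rank E2 : ℝ) * τ' = (deg E1 : ℝ) + (deg E2 : ℝ))
    ⦃E1' : Subobject E1⦄ ⦃E2' : Subobject E2⦄ (hsub : IsSubtriple Φ E1' E2')
    (hne_bot : ¬(E1' = ⊥ ∧ E2' = ⊥)) (hne_top : ¬(E1' = ⊤ ∧ E2' = ⊤)) :
    (deg (E1' : C) + deg (E2' : C) : ℝ) < rank (E1' : C) * τ + rank (E2' : C) * τ' := by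
  have hpos : 0 < rank (E1' : C) + rank (E2' : C) := by
    by_contra! h
    exact hne_bot ⟨(hrank_bot _ _).mpr (by omega), (hrank_bot _ _).mpr (by omega)⟩
  exact (thetaTau_neg_iff h2 hpos hττ').mp (hst E1' E2' hsub hne_bot hne_top)

/-- the four slope consequences of `τ`-stability, with
`r₁τ + r₂τ' = deg E₁ + deg E₂`. -/
theorem slope_bounds_of_tStable
    (rank : C → ℕ) (deg : C → ℤ) (E1 E2 : C) (Φ : E2 ⟶ E1) (τ τ' : ℝ)
    (hrank_bot : ∀ (B : C) (X : Subobject B), X = ⊥ ↔ rank (X : C) = 0)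
    (hrank_top : ∀ B : C, rank ((⊤ : Subobject B) : C) = rank B)
    (hdeg_top : ∀ B : C, deg ((⊤ : Subobject B) : C) = deg B)
    (hrank_add : ∀ (B : C) (X : Subobject B), rank B = rank (X : C) + rank (cokernel X.arrow))
    (hdeg_add : ∀ (B : C) (X : Subobject B), deg B = deg (X : C) + deg (cokernel X.arrow))
    (hiso : ∀ A B : C, Nonempty (A ≅ B) → rank A = rank B ∧ deg A = deg B)
    (h1 : 0 < rank E1) (h2 : 0 < rank E2)
    (hττ' : (rank E1 : ℝ) * τ + (rank E2 : ℝ) * τ' = (deg E1 : ℝ) + (deg E2 : ℝ))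
    (hst : TStable rank deg E1 E2 Φ τ) :
    (∀ E1' : Subobject E1, E1' ≠ ⊥ →
        bslope (deg (E1' : C)) (rank (E1' : C)) < τ) ∧
      (∀ E2' : Subobject E2, E2' ≠ ⊥ → E2' ≤ kernelSubobject Φ →
        bslope (deg (E2' : C)) (rank (E2' : C)) < τ') ∧
      (∀ E2' : Subobject E2, E2' ≠ ⊤ →
        τ' < bslope (deg (cokernel E2'.arrow)) (rank (cokernel E2'.arrow))) ∧
      (∀ E1' : Subobject E1, E1' ≠ ⊤ → Φ ≫ cokernel.π E1'.arrow = 0 →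
        τ < bslope (deg (cokernel E1'.arrow)) (rank (cokernel E1'.arrow))) := by
  have rank_bot (B : C) : rank ((⊥ : Subobject B) : C) = 0 := (hrank_bot B ⊥).mp rfl
  have deg_bot := deg_bot_eq_zero hdeg_add fun A B h => (hiso A B h).2
  have top_ne_bot1 := top_ne_bot_of_rank_pos hrank_bot hrank_top h1
  have top_ne_bot2 := top_ne_bot_of_rank_pos hrank_bot hrank_top h2
  have hlt := hst.deg_add_deg_lt hrank_bot h2 hττ'
  refine ⟨fun E1' hne => ?_, fun E2' hne hle => ?_, fun E2' hne => ?_, fun E1' hne hΦ => ?_⟩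
  · have := hlt (isSubtriple_bot_right Φ E1') (fun h => hne h.1) (fun h => top_ne_bot2 h.2.symm)
    rw [bslope_lt_iff (rank_pos_of_ne_bot hrank_bot hne)]
    simpa [rank_bot, deg_bot] using this
  · have := hlt (isSubtriple_bot_left Φ hle) (fun h => hne h.2) (fun h => top_ne_bot1 h.1.symm)
    rw [bslope_lt_iff (rank_pos_of_ne_bot hrank_bot hne)]
    simpa [rank_bot, deg_bot] using this
  · have := hlt (Subobject.top_factors _) (fun h => top_ne_bot1 h.1) (fun h => hne h.2)
    rw [hrank_top, hdeg_top] at this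
    rw [lt_bslope_cokernel_iff hrank_add hdeg_add (rank_cokernel_pos hrank_bot hrank_top hne)]
    linarith
  · have := hlt (isSubtriple_top_right Φ hΦ) (fun h => top_ne_bot2 h.2) (fun h => hne h.1)
    rw [hrank_top, hdeg_top] at this
    rw [lt_bslope_cokernel_iff hrank_add hdeg_add (rank_cokernel_pos hrank_bot hrank_top hne)]
    linarith
end
end

section
/- Suppose E₁ ≅ E₂ as holomorphic bundles. Then for any τ > μ(E₁), the triple (E₁, E₂, Φ) is τ-stable if and only if Φ is an isomorphism and E₁ is a stable bundle. -/
open CategoryTheory CategoryTheory.Limits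

noncomputable section

universe v u

variable {C : Type u} [Category.{v} C] [Abelian C]

/-! With `μ = μ(E₁) = μ(E₂)` and `excess X = deg X - μ · rank X`, the condition
`θ_τ(E₁', E₂') < 0` reads `excess E₁' + excess E₂' < (rank E₁' - rank E₂') (τ - μ)`.

If `im Φ ≠ E₁`, the subtriple `(im Φ, E₂)` gives `excess (im Φ) < -rank (ker Φ) (τ - μ)`, and when
`ker Φ ≠ 0` the subtriple `(0, ker Φ)` gives the same bound for `excess (ker Φ)`; since the two
excesses add up to `excess E₂ = 0`, this is impossible. So `Φ` is onto, hence an isomorphism by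
counting ranks, and the subtriples `(X, Φ⁻¹ X)` give `2 · excess X < 0`, i.e. `E₁` is stable.
Conversely, if `Φ` is an isomorphism then `rank E₂' ≤ rank E₁'`, and stability of `E₁` makes
both excesses nonpositive, that of `Φ E₂'` strictly unless `E₂' = 0`, in which case
`rank E₁' > 0`. -/

structure IsAdditiveRankDeg (rank : C → ℕ) (deg : C → ℤ) : Prop where
  eq_bot_iff : ∀ (B : C) (X : Subobject B), X = ⊥ ↔ rank (X : C) = 0
  rank_add : ∀ (B : C) (X : Subobject B), rank B = rank (X : C) + rank (cokernel X.arrow)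
  deg_add : ∀ (B : C) (X : Subobject B), deg B = deg (X : C) + deg (cokernel X.arrow)
  iso_invariant : ∀ A B : C, Nonempty (A ≅ B) → rank A = rank B ∧ deg A = deg B

/-- This is `rank X * (μ(X) - μ)` when `rank X ≠ 0`: its sign compares slopes without dividing
by a possibly vanishing rank. -/
def excess {α : Type*} (rank : α → ℕ) (deg : α → ℤ) (μ : ℝ) (X : α) : ℝ := deg X - rank X * μ

lemma excess_bslope_self {α : Type*} (rank : α → ℕ) (deg : α → ℤ) {B : α} (hB : rank B ≠ 0) :
    excess rank deg (bslope (deg B) (rank B)) B = 0 := by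
  have : (rank B : ℝ) ≠ 0 := by exact_mod_cast hB
  unfold excess bslope
  field_simp
  ring

lemma excess_neg_iff_bslope_lt {α : Type*} {rank : α → ℕ} {deg : α → ℤ} {μ : ℝ} {X : α}
    (hX : rank X ≠ 0) :
    excess rank deg μ X < 0 ↔ bslope (deg X) (rank X) < μ := by
  have : (0 : ℝ) < rank X := by exact_mod_cast Nat.pos_of_ne_zero hX
  rw [bslope, div_lt_iff₀ this, excess, sub_neg, mul_comm]

lemma thetaTau_self_neg_iff (τ : ℝ) {r : ℕ} (hr : r ≠ 0) (d : ℤ) {r1 r2 : ℕ} (hn : r1 + r2 ≠ 0)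
    (d1 d2 : ℤ) :
    thetaTau τ r r d d r1 r2 d1 d2 < 0 ↔
      (d1 - r1 * bslope d r) + (d2 - r2 * bslope d r) < ((r1 : ℝ) - r2) * (τ - bslope d r) := by
  have hr' : (r : ℝ) ≠ 0 := by exact_mod_cast hr
  have hn' : (0 : ℝ) < r1 + r2 := by exact_mod_cast Nat.pos_of_ne_zero hn
  have key : thetaTau τ r r d d r1 r2 d1 d2 * (r1 + r2) =
      (d1 - r1 * bslope d r) + (d2 - r2 * bslope d r) - (r1 - r2) * (τ - bslope d r) := by
    unfold thetaTau bslope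
    push_cast
    field_simp
    ring
  rw [← mul_lt_mul_iff_of_pos_right hn', zero_mul, key, sub_neg]

def cokernelKernelSubobjectIsoImageSubobject {A B : C} (f : A ⟶ B) :
    cokernel (kernelSubobject f).arrow ≅ (imageSubobject f : C) :=
  cokernelIsoOfEq (kernelSubobject_arrow f).symm ≪≫ cokernelEpiComp _ (kernel.ι f) ≪≫
    Abelian.coimageIsoImage' f ≪≫ (imageSubobjectIso f).symm

lemma mono_of_kernelSubobject_eq_bot {A B : C} {f : A ⟶ B} (hf : kernelSubobject f = ⊥) :
    Mono f := by
  refine Abelian.mono_of_kernel_ι_eq_zero f ?_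
  rw [← kernelSubobject_arrow', ← Subobject.ofLE_arrow hf.le, Subobject.bot_arrow, comp_zero,
    comp_zero]

lemma epi_of_imageSubobject_eq_top {A B : C} {f : A ⟶ B} (hf : imageSubobject f = ⊤) :
    Epi f := by
  have : IsIso (imageSubobject f).arrow := (Subobject.isIso_arrow_iff_eq_top _).mpr hf
  rw [← imageSubobject_arrow_comp f]
  exact epi_comp _ _

namespace CategoryTheory.Subobject

lemma map_obj_eq_mk {D : Type*} [Category D] {A B : D} (f : A ⟶ B) [Mono f] (X : Subobject A) :
    (Subobject.map f).obj X = Subobject.mk (X.arrow ≫ f) := by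
  conv_lhs => rw [← Subobject.mk_arrow X]
  rfl

lemma map_obj_eq_top_iff {D : Type*} [Category D] {A B : D} (f : A ⟶ B) [IsIso f]
    {X : Subobject A} : (Subobject.map f).obj X = ⊤ ↔ X = ⊤ :=
  map_eq_top_iff (Subobject.mapIsoToOrderIso (asIso f))

lemma map_obj_eq_bot_iff {D : Type*} [Category D] [HasZeroMorphisms D] [HasZeroObject D]
    {A B : D} (f : A ⟶ B) [IsIso f] {X : Subobject A} : (Subobject.map f).obj X = ⊥ ↔ X = ⊥ :=
  map_eq_bot_iff (Subobject.mapIsoToOrderIso (asIso f))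

end CategoryTheory.Subobject

lemma isSubtriple_iff_map_le {D : Type*} [Category D] {E1 E2 : D} (Φ : E2 ⟶ E1) [Mono Φ]
    (E1' : Subobject E1) (E2' : Subobject E2) :
    IsSubtriple Φ E1' E2' ↔ (Subobject.map Φ).obj E2' ≤ E1' := by
  rw [Subobject.map_obj_eq_mk, IsSubtriple]
  exact ⟨fun hf => Subobject.mk_le_of_comm _ (Subobject.factorThru_arrow _ _ hf),
    fun hle => Subobject.factors_of_le _ hle (Subobject.mk_factors_self _)⟩

lemma isSubtriple_image_top {E1 E2 : C} (Φ : E2 ⟶ E1) : IsSubtriple Φ (imageSubobject Φ) ⊤ :=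
  imageSubobject_factors_comp_self Φ _

lemma isSubtriple_bot_kernel {E1 E2 : C} (Φ : E2 ⟶ E1) : IsSubtriple Φ ⊥ (kernelSubobject Φ) := by
  rw [IsSubtriple, kernelSubobject_arrow_comp]
  exact Subobject.factors_zero

namespace IsAdditiveRankDeg

variable {rank : C → ℕ} {deg : C → ℤ}

lemma rank_eq_of_iso (h : IsAdditiveRankDeg rank deg) {A B : C} (e : A ≅ B) : rank A = rank B :=
  (h.iso_invariant A B ⟨e⟩).1

lemma deg_eq_of_iso (h : IsAdditiveRankDeg rank deg) {A B : C} (e : A ≅ B) : deg A = deg B :=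
  (h.iso_invariant A B ⟨e⟩).2

lemma excess_eq_of_iso (h : IsAdditiveRankDeg rank deg) (μ : ℝ) {A B : C} (e : A ≅ B) :
    excess rank deg μ A = excess rank deg μ B := by
  rw [excess, excess, h.rank_eq_of_iso e, h.deg_eq_of_iso e]

lemma rank_ne_zero_iff (h : IsAdditiveRankDeg rank deg) {B : C} (X : Subobject B) :
    rank (X : C) ≠ 0 ↔ X ≠ ⊥ :=
  (h.eq_bot_iff B X).not.symm

lemma rank_bot (h : IsAdditiveRankDeg rank deg) (B : C) : rank ((⊥ : Subobject B) : C) = 0 :=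
  (h.eq_bot_iff B ⊥).mp rfl

lemma deg_bot (h : IsAdditiveRankDeg rank deg) (B : C) : deg ((⊥ : Subobject B) : C) = 0 := by
  have hadd := h.deg_add B ⊥
  rw [h.deg_eq_of_iso (cokernelIsoOfEq Subobject.bot_arrow ≪≫ cokernelZeroIsoTarget)] at hadd
  omega

lemma excess_bot (h : IsAdditiveRankDeg rank deg) (μ : ℝ) (B : C) :
    excess rank deg μ ((⊥ : Subobject B) : C) = 0 := by
  simp [excess, h.rank_bot, h.deg_bot]

lemma rank_top (h : IsAdditiveRankDeg rank deg) (B : C) : rank ((⊤ : Subobject B) : C) = rank B :=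
  h.rank_eq_of_iso (asIso (⊤ : Subobject B).arrow)

lemma excess_top (h : IsAdditiveRankDeg rank deg) (μ : ℝ) (B : C) :
    excess rank deg μ ((⊤ : Subobject B) : C) = excess rank deg μ B :=
  h.excess_eq_of_iso μ (asIso (⊤ : Subobject B).arrow)

lemma top_ne_bot (h : IsAdditiveRankDeg rank deg) {B : C} (hB : rank B ≠ 0) :
    (⊤ : Subobject B) ≠ ⊥ :=
  (h.rank_ne_zero_iff ⊤).mp (h.rank_top B ▸ hB)

lemma rank_le_of_mono (h : IsAdditiveRankDeg rank deg) {A B : C} (f : A ⟶ B) [Mono f] :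
    rank A ≤ rank B := by
  have hadd := h.rank_add B (Subobject.mk f)
  rw [h.rank_eq_of_iso (Subobject.underlyingIso f)] at hadd
  omega

lemma rank_le_of_le (h : IsAdditiveRankDeg rank deg) {B : C} {X Y : Subobject B} (hXY : X ≤ Y) :
    rank (X : C) ≤ rank (Y : C) :=
  h.rank_le_of_mono (Subobject.ofLE X Y hXY)

lemma rank_map (h : IsAdditiveRankDeg rank deg) {A B : C} (f : A ⟶ B) [Mono f] (X : Subobject A) :
    rank ((Subobject.map f).obj X : C) = rank (X : C) := by
  rw [Subobject.map_obj_eq_mk]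
  exact h.rank_eq_of_iso (Subobject.underlyingIso _)

lemma excess_map (h : IsAdditiveRankDeg rank deg) (μ : ℝ) {A B : C} (f : A ⟶ B) [Mono f]
    (X : Subobject A) : excess rank deg μ ((Subobject.map f).obj X : C) = excess rank deg μ X := by
  rw [Subobject.map_obj_eq_mk]
  exact h.excess_eq_of_iso μ (Subobject.underlyingIso _)

lemma rank_kernel_add_rank_image (h : IsAdditiveRankDeg rank deg) {A B : C} (f : A ⟶ B) :
    rank (kernelSubobject f : C) + rank (imageSubobject f : C) = rank A := by
  rw [h.rank_add A (kernelSubobject f),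
    h.rank_eq_of_iso (cokernelKernelSubobjectIsoImageSubobject f)]

lemma excess_kernel_add_excess_image (h : IsAdditiveRankDeg rank deg) (μ : ℝ) {A B : C}
    (f : A ⟶ B) :
    excess rank deg μ (kernelSubobject f : C) + excess rank deg μ (imageSubobject f : C) =
      excess rank deg μ A := by
  have hr := h.rank_add A (kernelSubobject f)
  have hd := h.deg_add A (kernelSubobject f)
  rw [h.rank_eq_of_iso (cokernelKernelSubobjectIsoImageSubobject f)] at hr
  rw [h.deg_eq_of_iso (cokernelKernelSubobjectIsoImageSubobject f)] at hd
  simp only [excess, hr, hd]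
  push_cast
  ring

lemma bStable_iff (h : IsAdditiveRankDeg rank deg) (B : C) :
    BStable rank deg B ↔ ∀ X : Subobject B, X ≠ ⊥ → X ≠ ⊤ →
      excess rank deg (bslope (deg B) (rank B)) (X : C) < 0 := by
  refine forall₂_congr fun X hX => forall_congr' fun _ => ?_
  exact (excess_neg_iff_bslope_lt ((h.rank_ne_zero_iff X).mpr hX)).symm

lemma excess_nonpos_of_bStable (h : IsAdditiveRankDeg rank deg) {B : C} (hB : rank B ≠ 0)
    (hst : BStable rank deg B) (X : Subobject B) :
    excess rank deg (bslope (deg B) (rank B)) (X : C) ≤ 0 := by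
  rcases eq_or_ne X ⊥ with rfl | hX
  · exact (h.excess_bot _ B).le
  rcases eq_or_ne X ⊤ with rfl | hX'
  · exact (h.excess_top _ B ▸ excess_bslope_self rank deg hB).le
  · exact ((h.bStable_iff B).mp hst X hX hX').le

lemma theta_neg_iff (h : IsAdditiveRankDeg rank deg) {E1 E2 : C} (hr : rank E2 = rank E1)
    (hd : deg E2 = deg E1) (h1 : rank E1 ≠ 0) (τ : ℝ) {E1' : Subobject E1} {E2' : Subobject E2}
    (hne : ¬(E1' = ⊥ ∧ E2' = ⊥)) :
    theta rank deg E1 E2 τ E1' E2' < 0 ↔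
      excess rank deg (bslope (deg E1) (rank E1)) (E1' : C) +
        excess rank deg (bslope (deg E1) (rank E1)) (E2' : C) <
      ((rank (E1' : C) : ℝ) - rank (E2' : C)) * (τ - bslope (deg E1) (rank E1)) := by
  have hn : rank (E1' : C) + rank (E2' : C) ≠ 0 := by
    rw [ne_eq, Nat.add_eq_zero_iff, ← h.eq_bot_iff, ← h.eq_bot_iff]
    exact hne
  rw [theta, hr, hd]
  exact thetaTau_self_neg_iff τ h1 _ hn _ _

end IsAdditiveRankDeg

section Triple

variable {rank : C → ℕ} {deg : C → ℤ} {E1 E2 : C} {Φ : E2 ⟶ E1} {τ : ℝ}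

lemma imageSubobject_eq_top_of_tStable (h : IsAdditiveRankDeg rank deg) (e : E1 ≅ E2)
    (h1 : rank E1 ≠ 0) (hτ : bslope (deg E1) (rank E1) < τ) (hT : TStable rank deg E1 E2 Φ τ) :
    imageSubobject Φ = ⊤ := by
  set μ := bslope (deg E1) (rank E1)
  have hr := h.rank_eq_of_iso e.symm
  have hd := h.deg_eq_of_iso e.symm
  set K := kernelSubobject Φ
  set I := imageSubobject Φ
  have hrank : rank (K : C) + rank (I : C) = rank E1 := hr ▸ h.rank_kernel_add_rank_image Φ
  have hexcess : excess rank deg μ K + excess rank deg μ I = 0 := by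
    rw [h.excess_kernel_add_excess_image, h.excess_eq_of_iso μ e.symm,
      excess_bslope_self rank deg h1]
  by_contra hI
  have himage : excess rank deg μ I < -(rank (K : C) * (τ - μ)) := by
    have hθ := hT I ⊤ (isSubtriple_image_top Φ) (fun h' => h.top_ne_bot (hr ▸ h1) h'.2)
      (fun h' => hI h'.1)
    rw [h.theta_neg_iff hr hd h1 τ (fun h' => h.top_ne_bot (hr ▸ h1) h'.2), h.excess_top,
      h.excess_eq_of_iso μ e.symm, excess_bslope_self rank deg h1, h.rank_top, hr] at hθ
    have hcoeff : ((rank (I : C) : ℝ) - rank E1) * (τ - μ) = -(rank (K : C) * (τ - μ)) := by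
      rw [← hrank]
      push_cast
      ring
    linarith
  rcases eq_or_ne K ⊥ with hK | hK
  · rw [hK, h.excess_bot] at hexcess
    rw [hK, h.rank_bot] at himage
    simp only [Nat.cast_zero, zero_mul, neg_zero] at himage
    linarith
  · have hkernel : excess rank deg μ K < -(rank (K : C) * (τ - μ)) := by
      have hθ := hT ⊥ K (isSubtriple_bot_kernel Φ) (fun h' => hK h'.2)
        (fun h' => h.top_ne_bot h1 h'.1.symm)
      rw [h.theta_neg_iff hr hd h1 τ (fun h' => hK h'.2), h.excess_bot, h.rank_bot] at hθ
      push_cast at hθ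
      linarith
    have : 0 < (rank (K : C) : ℝ) * (τ - μ) :=
      mul_pos (by exact_mod_cast Nat.pos_of_ne_zero ((h.rank_ne_zero_iff K).mpr hK))
        (sub_pos.mpr hτ)
    linarith

lemma isIso_of_tStable (h : IsAdditiveRankDeg rank deg) (e : E1 ≅ E2) (h1 : rank E1 ≠ 0)
    (hτ : bslope (deg E1) (rank E1) < τ) (hT : TStable rank deg E1 E2 Φ τ) : IsIso Φ := by
  have hI := imageSubobject_eq_top_of_tStable h e h1 hτ hT
  have : Epi Φ := epi_of_imageSubobject_eq_top hI
  have hK : rank (kernelSubobject Φ : C) = 0 := by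
    have := h.rank_kernel_add_rank_image Φ
    rw [hI, h.rank_top, h.rank_eq_of_iso e] at this
    omega
  have : Mono Φ := mono_of_kernelSubobject_eq_bot ((h.eq_bot_iff _ _).mpr hK)
  exact isIso_of_mono_of_epi Φ

lemma bStable_of_tStable [IsIso Φ] (h : IsAdditiveRankDeg rank deg) (e : E1 ≅ E2)
    (h1 : rank E1 ≠ 0) (hT : TStable rank deg E1 E2 Φ τ) : BStable rank deg E1 := by
  rw [h.bStable_iff]
  intro X hX hX'
  set Y := (Subobject.map (inv Φ)).obj X
  have hY : (Subobject.map Φ).obj Y = X :=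
    (Subobject.mapIsoToOrderIso (asIso Φ)).apply_symm_apply X
  have hθ := hT X Y ((isSubtriple_iff_map_le Φ X Y).mpr hY.le) (fun h' => hX h'.1)
    (fun h' => hX' h'.1)
  rw [h.theta_neg_iff (h.rank_eq_of_iso e.symm) (h.deg_eq_of_iso e.symm) h1 τ
    (fun h' => hX h'.1), h.rank_map, h.excess_map, sub_self, zero_mul] at hθ
  linarith

lemma tStable_of_bStable [IsIso Φ] (h : IsAdditiveRankDeg rank deg) (e : E1 ≅ E2)
    (h1 : rank E1 ≠ 0) (hτ : bslope (deg E1) (rank E1) < τ) (hst : BStable rank deg E1) :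
    TStable rank deg E1 E2 Φ τ := by
  intro E1' E2' hsub hbot htop
  set μ := bslope (deg E1) (rank E1)
  rw [h.theta_neg_iff (h.rank_eq_of_iso e.symm) (h.deg_eq_of_iso e.symm) h1 τ hbot,
    ← h.rank_map Φ E2', ← h.excess_map μ Φ E2']
  have hle := (isSubtriple_iff_map_le Φ E1' E2').mp hsub
  set Y := (Subobject.map Φ).obj E2'
  have hrank : (rank (Y : C) : ℝ) ≤ rank (E1' : C) := by exact_mod_cast h.rank_le_of_le hle
  have hE1' := h.excess_nonpos_of_bStable h1 hst E1'
  have hτμ : 0 < τ - μ := sub_pos.mpr hτ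
  rcases eq_or_ne Y ⊥ with hY | hY
  · have hE2' : E2' = ⊥ := (Subobject.map_obj_eq_bot_iff Φ).mp hY
    have hE1'_pos : (0 : ℝ) < rank (E1' : C) := by
      exact_mod_cast Nat.pos_of_ne_zero ((h.rank_ne_zero_iff E1').mpr fun h' => hbot ⟨h', hE2'⟩)
    rw [hY, h.excess_bot, h.rank_bot, Nat.cast_zero, sub_zero]
    have := mul_pos hE1'_pos hτμ
    linarith
  · have hY' : Y ≠ ⊤ := fun hYtop =>
      htop ⟨top_le_iff.mp (hYtop ▸ hle), (Subobject.map_obj_eq_top_iff Φ).mp hYtop⟩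
    have hYneg := (h.bStable_iff E1).mp hst Y hY hY'
    have := mul_nonneg (sub_nonneg.mpr hrank) hτμ.le
    linarith

end Triple

theorem tStable_iff_of_iso_general
    (rank : C → ℕ) (deg : C → ℤ) (E1 E2 : C) (Φ : E2 ⟶ E1) (τ : ℝ)
    (hrank_bot : ∀ (B : C) (X : Subobject B), X = ⊥ ↔ rank (X : C) = 0)
    (hrank_add : ∀ (B : C) (X : Subobject B), rank B = rank (X : C) + rank (cokernel X.arrow))
    (hdeg_add : ∀ (B : C) (X : Subobject B), deg B = deg (X : C) + deg (cokernel X.arrow))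
    (hiso : ∀ A B : C, Nonempty (A ≅ B) → rank A = rank B ∧ deg A = deg B)
    (h1 : 0 < rank E1)
    (e : E1 ≅ E2) (hτ : bslope (deg E1) (rank E1) < τ) :
    TStable rank deg E1 E2 Φ τ ↔ (IsIso Φ ∧ BStable rank deg E1) := by
  have h : IsAdditiveRankDeg rank deg := ⟨hrank_bot, hrank_add, hdeg_add, hiso⟩
  refine ⟨fun hT => ?_, fun ⟨_, hst⟩ => tStable_of_bStable h e h1.ne' hτ hst⟩
  have : IsIso Φ := isIso_of_tStable h e h1.ne' hτ hT
  exact ⟨this, bStable_of_tStable h e h1.ne' hT⟩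

/-- if `E₁ ≅ E₂`, then for any `τ > μ(E₁)` the triple `(E₁, E₂, Φ)` is
`τ`-stable iff `Φ` is an isomorphism and `E₁` is a stable bundle. -/
theorem tStable_iff_of_iso
    (rank : C → ℕ) (deg : C → ℤ) (E1 E2 : C) (Φ : E2 ⟶ E1) (τ : ℝ)
    (hrank_bot : ∀ (B : C) (X : Subobject B), X = ⊥ ↔ rank (X : C) = 0)
    (hrank_top : ∀ B : C, rank ((⊤ : Subobject B) : C) = rank B)
    (hdeg_top : ∀ B : C, deg ((⊤ : Subobject B) : C) = deg B)
    (hrank_add : ∀ (B : C) (X : Subobject B), rank B = rank (X : C) + rank (cokernel X.arrow))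
    (hdeg_add : ∀ (B : C) (X : Subobject B), deg B = deg (X : C) + deg (cokernel X.arrow))
    (hiso : ∀ A B : C, Nonempty (A ≅ B) → rank A = rank B ∧ deg A = deg B)
    (h1 : 0 < rank E1) (h2 : 0 < rank E2)
    (e : E1 ≅ E2) (hτ : bslope (deg E1) (rank E1) < τ) :
    TStable rank deg E1 E2 Φ τ ↔ (IsIso Φ ∧ BStable rank deg E1) :=
  tStable_iff_of_iso_general rank deg E1 E2 Φ τ hrank_bot hrank_add hdeg_add hiso h1 e hτ
end
end
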